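/- Let r₁ ≥ r₂ > 0, V = ℝ^d×{0}, and let ρ ∈ [r₂²/r₁, r₂]. If p ∈ R̄_{1,V}(0,r) and p' ∈ B(p, ρ) (Heisenberg ball), then |x'^d| ≤ 2r₁, |(x'⊥, y')| ≤ 2r₂, and |z' + 2⟨x'^d, y'^d⟩| ≤ 16 r₁ ρ. -/

import Mathlib

open scoped RealInnerProductSpace

/-- The underlying set of the Heisenberg group `ℍⁿ = ℝⁿ × ℝⁿ × ℝ`. -/
abbrev Heis (n : ℕ) := EuclideanSpace ℝ (Fin n) × EuclideanSpace ℝ (Fin n) × ℝ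

/-- The Heisenberg group operation. -/
noncomputable def hMul {n : ℕ} (p p' : Heis n) : Heis n :=
  (p.1 + p'.1, p.2.1 + p'.2.1,
    p.2.2 + p'.2.2 + 2 * (⟪p.1, p'.2.1⟫ - ⟪p.2.1, p'.1⟫))

/-- The Heisenberg group inverse. -/
def hInv {n : ℕ} (p : Heis n) : Heis n := (-p.1, -p.2.1, -p.2.2)

/-- `|(a,b)|`, the Euclidean norm of a pair of vectors viewed in `ℝ^{2n}`. -/
noncomputable def pnorm {n : ℕ} (a b : EuclideanSpace ℝ (Fin n)) : ℝ :=
  Real.sqrt (‖a‖ ^ 2 + ‖b‖ ^ 2)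

/-- The homogeneous (Korányi) norm. -/
noncomputable def hNorm {n : ℕ} (p : Heis n) : ℝ :=
  (pnorm p.1 p.2.1 ^ 4 + p.2.2 ^ 2) ^ ((1 : ℝ) / 4)

/-- The left-invariant Heisenberg metric `d_ℍ(p,p') = ‖p⁻¹ * p'‖_ℍ`. -/
noncomputable def dH {n : ℕ} (p p' : Heis n) : ℝ := hNorm (hMul (hInv p) p')

/-- `x ↦ x^d = (x₁,…,x_d,0,…,0)`. -/
noncomputable def trunc {n : ℕ} (d : ℕ) (x : EuclideanSpace ℝ (Fin n)) :
    EuclideanSpace ℝ (Fin n) :=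
  WithLp.toLp 2 (fun i : Fin n => if (i : ℕ) < d then x i else 0)

/-- `x ↦ x⊥ = (0,…,0,x_{d+1},…,x_n)`. -/
noncomputable def truncPerp {n : ℕ} (d : ℕ) (x : EuclideanSpace ℝ (Fin n)) :
    EuclideanSpace ℝ (Fin n) :=
  WithLp.toLp 2 (fun i : Fin n => if (i : ℕ) < d then 0 else x i)

/-- The type-1 rectangle `R̄_{1,V}(0,r)` for `V = ℝ^d × {0}`. -/
noncomputable def rect1 (n d : ℕ) (r₁ r₂ : ℝ) : Set (Heis n) :=
  {p | ‖trunc d p.1‖ ≤ r₁ ∧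
    pnorm (truncPerp d p.1) p.2.1 ^ 4 +
      |p.2.2 + 2 * ⟪trunc d p.1, trunc d p.2.1⟫| ^ 2 ≤ r₂ ^ 4}

/-- The type-2 rectangle `R̄_{2,V}(0,r)` for `V = ℝ^d × {0}`. -/
noncomputable def rect2 (n d : ℕ) (r₁ r₂ : ℝ) : Set (Heis n) :=
  {p | ‖trunc d p.1‖ ≤ r₁ ∧
    pnorm (truncPerp d p.1) p.2.1 ^ 4 +
      |p.2.2 - 2 * ⟪trunc d p.1, trunc d p.2.1⟫| ^ 2 ≤ r₂ ^ 4}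

/-!
Write `p' = p · q` with `q = p⁻¹ p'`, so that `|(q_x, q_y)| ≤ ρ` and `|q_z| ≤ ρ²`. The horizontal
coordinates of `p'` are those of `p` shifted by `(q_x, q_y)`, which gives the first two bounds by
the triangle inequality. The height `z + 2⟨x^d, y^d⟩` of `p · q` differs from that of `p` by `q_z`
and a few inner products of a coordinate of `p` or `q` with one of `q`; by Cauchy–Schwarz, and
since `r₂² ≤ r₁ ρ` and `ρ ≤ r₂ ≤ r₁`, each term is `O(r₁ ρ)` and they add up to at most `14 r₁ ρ`.
-/

section Truncation

variable {n : ℕ} (d : ℕ) (x y : EuclideanSpace ℝ (Fin n))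

lemma trunc_add : trunc d (x + y) = trunc d x + trunc d y := by
  ext i
  simp only [trunc, PiLp.add_apply, PiLp.toLp_apply]
  split <;> simp

lemma truncPerp_add : truncPerp d (x + y) = truncPerp d x + truncPerp d y := by
  ext i
  simp only [truncPerp, PiLp.add_apply, PiLp.toLp_apply]
  split <;> simp

lemma trunc_add_truncPerp : trunc d x + truncPerp d x = x := by
  ext i
  simp only [trunc, truncPerp, PiLp.add_apply]
  split <;> simp

lemma norm_trunc_le : ‖trunc d x‖ ≤ ‖x‖ := by
  rw [EuclideanSpace.norm_eq, EuclideanSpace.norm_eq]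
  gcongr with i
  simp only [trunc, PiLp.toLp_apply]
  split <;> simp

lemma norm_truncPerp_le : ‖truncPerp d x‖ ≤ ‖x‖ := by
  rw [EuclideanSpace.norm_eq, EuclideanSpace.norm_eq]
  gcongr with i
  simp only [truncPerp, PiLp.toLp_apply]
  split <;> simp

lemma norm_le_norm_trunc_add_norm_truncPerp : ‖x‖ ≤ ‖trunc d x‖ + ‖truncPerp d x‖ := by
  conv_lhs => rw [← trunc_add_truncPerp d x]
  exact norm_add_le _ _

end Truncation

section PairNorm

variable {n : ℕ} (a b : EuclideanSpace ℝ (Fin n))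

lemma pnorm_eq_norm_toLp : pnorm a b = ‖WithLp.toLp 2 (a, b)‖ := by
  rw [WithLp.prod_norm_eq_of_L2]
  rfl

lemma pnorm_nonneg : 0 ≤ pnorm a b := Real.sqrt_nonneg _

lemma norm_le_pnorm_left : ‖a‖ ≤ pnorm a b := by
  rw [pnorm_eq_norm_toLp]
  exact WithLp.norm_fst_le (x := WithLp.toLp 2 (a, b))

lemma norm_le_pnorm_right : ‖b‖ ≤ pnorm a b := by
  rw [pnorm_eq_norm_toLp]
  exact WithLp.norm_snd_le (x := WithLp.toLp 2 (a, b))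

lemma pnorm_add_le (a' b' : EuclideanSpace ℝ (Fin n)) :
    pnorm (a + a') (b + b') ≤ pnorm a b + pnorm a' b' := by
  simp only [pnorm_eq_norm_toLp, ← Prod.mk_add_mk, WithLp.toLp_add]
  exact norm_add_le _ _

lemma pnorm_le_pnorm {a b a' b' : EuclideanSpace ℝ (Fin n)} (ha : ‖a‖ ≤ ‖a'‖) (hb : ‖b‖ ≤ ‖b'‖) :
    pnorm a b ≤ pnorm a' b' := by
  unfold pnorm
  gcongr

end PairNorm

lemma le_and_abs_le_sq_of_pow_four_add_sq_le {a b r : ℝ} (ha : 0 ≤ a) (hr : 0 ≤ r)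
    (h : a ^ 4 + b ^ 2 ≤ r ^ 4) : a ≤ r ∧ |b| ≤ r ^ 2 :=
  ⟨le_of_pow_le_pow_left₀ four_ne_zero hr (by nlinarith [sq_nonneg b]),
    abs_le_of_sq_le_sq (by nlinarith [pow_nonneg ha 4]) (by positivity)⟩

section Heisenberg

variable {n : ℕ}

lemma hMul_hInv_cancel_left (p p' : Heis n) : hMul p (hMul (hInv p) p') = p' := by
  obtain ⟨x, y, z⟩ := p
  obtain ⟨x', y', z'⟩ := p'
  simp only [hMul, hInv, add_neg_cancel_left, inner_neg_left, inner_add_right, inner_neg_right,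
    real_inner_comm x y, Prod.mk.injEq, true_and]
  ring

lemma pow_four_add_sq_lt_of_hNorm_lt {q : Heis n} {ρ : ℝ} (h : hNorm q < ρ) :
    pnorm q.1 q.2.1 ^ 4 + q.2.2 ^ 2 < ρ ^ 4 := by
  have hS : 0 ≤ pnorm q.1 q.2.1 ^ 4 + q.2.2 ^ 2 := by positivity
  rw [hNorm, one_div] at h
  have := pow_lt_pow_left₀ h (by positivity) four_ne_zero
  rwa [show (4 : ℝ) = (4 : ℕ) by norm_num, Real.rpow_inv_natCast_pow hS four_ne_zero] at this

variable (d : ℕ)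

noncomputable def rect1Height (p : Heis n) : ℝ := p.2.2 + 2 * ⟪trunc d p.1, trunc d p.2.1⟫

lemma rect1Height_hMul (p q : Heis n) :
    rect1Height d (hMul p q) = rect1Height d p + q.2.2 + 2 * ⟪p.1, q.2.1⟫ - 2 * ⟪p.2.1, q.1⟫ +
      2 * ⟪trunc d p.1, trunc d q.2.1⟫ + 2 * ⟪trunc d q.1, trunc d p.2.1⟫ +
      2 * ⟪trunc d q.1, trunc d q.2.1⟫ := by
  simp only [rect1Height, hMul, trunc_add, inner_add_left, inner_add_right]
  ring

lemma abs_inner_trunc_le (x y : EuclideanSpace ℝ (Fin n)) :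
    |⟪trunc d x, trunc d y⟫| ≤ ‖trunc d x‖ * ‖y‖ :=
  (abs_real_inner_le_norm _ _).trans (by gcongr; exact norm_trunc_le d y)

lemma abs_rect1Height_hMul_le (p q : Heis n) :
    |rect1Height d (hMul p q)| ≤ |rect1Height d p| + |q.2.2| +
      2 * (‖p.1‖ * ‖q.2.1‖ + ‖p.2.1‖ * ‖q.1‖ + ‖trunc d p.1‖ * ‖q.2.1‖ +
        ‖q.1‖ * ‖p.2.1‖ + ‖q.1‖ * ‖q.2.1‖) := by
  have h₁ := abs_real_inner_le_norm p.1 q.2.1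
  have h₂ := abs_real_inner_le_norm p.2.1 q.1
  have h₃ := abs_inner_trunc_le d p.1 q.2.1
  have h₄ : |⟪trunc d q.1, trunc d p.2.1⟫| ≤ ‖q.1‖ * ‖p.2.1‖ :=
    (abs_inner_trunc_le d q.1 p.2.1).trans (by gcongr; exact norm_trunc_le d q.1)
  have h₅ : |⟪trunc d q.1, trunc d q.2.1⟫| ≤ ‖q.1‖ * ‖q.2.1‖ :=
    (abs_inner_trunc_le d q.1 q.2.1).trans (by gcongr; exact norm_trunc_le d q.1)
  have h₆ := abs_le.mp (le_refl |rect1Height d p|)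
  have h₇ := abs_le.mp (le_refl |q.2.2|)
  rw [abs_le] at h₁ h₂ h₃ h₄ h₅ ⊢
  rw [rect1Height_hMul]
  constructor <;> linarith

lemma norm_trunc_hMul_fst_le (p q : Heis n) :
    ‖trunc d (hMul p q).1‖ ≤ ‖trunc d p.1‖ + ‖q.1‖ :=
  calc ‖trunc d (p.1 + q.1)‖ = ‖trunc d p.1 + trunc d q.1‖ := by rw [trunc_add]
    _ ≤ ‖trunc d p.1‖ + ‖q.1‖ := (norm_add_le _ _).trans (by gcongr; exact norm_trunc_le d q.1)

lemma pnorm_truncPerp_hMul_le (p q : Heis n) :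
    pnorm (truncPerp d (hMul p q).1) (hMul p q).2.1 ≤
      pnorm (truncPerp d p.1) p.2.1 + pnorm q.1 q.2.1 :=
  calc pnorm (truncPerp d (p.1 + q.1)) (p.2.1 + q.2.1)
      = pnorm (truncPerp d p.1 + truncPerp d q.1) (p.2.1 + q.2.1) := by rw [truncPerp_add]
    _ ≤ pnorm (truncPerp d p.1) p.2.1 + pnorm (truncPerp d q.1) q.2.1 := pnorm_add_le _ _ _ _
    _ ≤ pnorm (truncPerp d p.1) p.2.1 + pnorm q.1 q.2.1 := by
      gcongr
      exact pnorm_le_pnorm (norm_truncPerp_le d q.1) le_rfl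

end Heisenberg

theorem rect1_ball_coordinate_bounds_large_r1_general {n d : ℕ} {r₁ r₂ ρ : ℝ}
    (hr₂ : 0 < r₂) (hr : r₂ ≤ r₁) (hρ₁ : r₂ ^ 2 / r₁ ≤ ρ) (hρ₂ : ρ ≤ r₂)
    (p p' : Heis n) (hp : p ∈ rect1 n d r₁ r₂) (hp' : dH p p' < ρ) :
    ‖trunc d p'.1‖ ≤ 2 * r₁ ∧
    pnorm (truncPerp d p'.1) p'.2.1 ≤ 2 * r₂ ∧
    |p'.2.2 + 2 * ⟪trunc d p'.1, trunc d p'.2.1⟫| ≤ 16 * r₁ * ρ := by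
  have hr₁ : 0 < r₁ := hr₂.trans_le hr
  have hρ : 0 < ρ := (by positivity : 0 < r₂ ^ 2 / r₁).trans_le hρ₁
  have hr₂ρ : r₂ ^ 2 ≤ r₁ * ρ := by rwa [div_le_iff₀ hr₁, mul_comm] at hρ₁
  set q := hMul (hInv p) p'
  have hball : hNorm q < ρ := hp'
  obtain ⟨hq, hw⟩ := le_and_abs_le_sq_of_pow_four_add_sq_le (pnorm_nonneg _ _) hρ.le
    (pow_four_add_sq_lt_of_hNorm_lt hball).le
  obtain ⟨hx, hp⟩ := hp
  obtain ⟨hperp, hA⟩ : _ ∧ |rect1Height d p| ≤ r₂ ^ 2 :=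
    le_and_abs_le_sq_of_pow_four_add_sq_le (pnorm_nonneg _ _) hr₂.le (by rwa [sq_abs] at hp)
  have hu := (norm_le_pnorm_left _ _).trans hq
  have hv := (norm_le_pnorm_right _ _).trans hq
  have hy := (norm_le_pnorm_right _ _).trans hperp
  have hx' : ‖p.1‖ ≤ r₁ + r₂ := (norm_le_norm_trunc_add_norm_truncPerp d p.1).trans
    (add_le_add hx ((norm_le_pnorm_left _ _).trans hperp))
  rw [← hMul_hInv_cancel_left p p']
  refine ⟨by linarith [norm_trunc_hMul_fst_le d p q],
    by linarith [pnorm_truncPerp_hMul_le d p q], ?_⟩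
  calc |rect1Height d (hMul p q)|
      ≤ |rect1Height d p| + |q.2.2| + 2 * (‖p.1‖ * ‖q.2.1‖ + ‖p.2.1‖ * ‖q.1‖ +
          ‖trunc d p.1‖ * ‖q.2.1‖ + ‖q.1‖ * ‖p.2.1‖ + ‖q.1‖ * ‖q.2.1‖) :=
        abs_rect1Height_hMul_le d p q
    _ ≤ r₂ ^ 2 + ρ ^ 2 + 2 * ((r₁ + r₂) * ρ + r₂ * ρ + r₁ * ρ + ρ * r₂ + ρ * ρ) := by gcongr
    _ ≤ 16 * r₁ * ρ := by nlinarith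

theorem rect1_ball_coordinate_bounds_large_r1 {n d : ℕ} (hd : d ≤ n) {r₁ r₂ ρ : ℝ}
    (hr₂ : 0 < r₂) (hr : r₂ ≤ r₁) (hρ₁ : r₂ ^ 2 / r₁ ≤ ρ) (hρ₂ : ρ ≤ r₂)
    (p p' : Heis n) (hp : p ∈ rect1 n d r₁ r₂) (hp' : dH p p' < ρ) :
    ‖trunc d p'.1‖ ≤ 2 * r₁ ∧
    pnorm (truncPerp d p'.1) p'.2.1 ≤ 2 * r₂ ∧
    |p'.2.2 + 2 * ⟪trunc d p'.1, trunc d p'.2.1⟫| ≤ 16 * r₁ * ρ :=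
  rect1_ball_coordinate_bounds_large_r1_general hr₂ hr hρ₁ hρ₂ p p' hp hp'
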